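/- If U, V are independent random variables each uniform on [0,1], then the components of the rotated pair obtained by mapping (U,V) through the inverse standard-normal CDF componentwise and then applying any orthogonal 2×2 matrix, followed by the standard-normal CDF componentwise, are again independent and uniform on [0,1], yet for a nontrivial rotation this map is not of the form (u,v) ↦ (h₁(u), h₂(v)). -/

import Mathlib

open MeasureTheory ProbabilityTheory Matrix

namespace GaussRotAux

lemma gauss_pos {s : Set ℝ} (hvol : 0 < volume s) : 0 < gaussianReal 0 1 s := by
  rw [gaussianReal_apply 0 one_ne_zero s]
  by_contra h
  push_neg at h
  have h0 : ∫⁻ x in s, gaussianPDF 0 1 x = 0 := le_antisymm h zero_le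
  rw [lintegral_eq_zero_iff (measurable_gaussianPDF 0 1)] at h0
  have h1 : (volume.restrict s) {x | ¬ gaussianPDF 0 1 x = 0} = 0 := h0
  have huniv : {x : ℝ | ¬ gaussianPDF 0 1 x = 0} = Set.univ := by
    ext x; simp [(gaussianPDF_pos 0 one_ne_zero x).ne']
  rw [huniv, Measure.restrict_apply_univ] at h1
  exact absurd h1 hvol.ne'

lemma map_withDensity_mequiv {α : Type*} [MeasurableSpace α] (e : α ≃ᵐ α) (μ : Measure α)
    {f : α → ENNReal} (hf : Measurable f) :
    Measure.map e (μ.withDensity f) = (Measure.map e μ).withDensity (f ∘ e.symm) := by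
  ext s hs
  rw [Measure.map_apply e.measurable hs, withDensity_apply _ (e.measurable hs),
    withDensity_apply _ hs, setLIntegral_map hs (hf.comp e.symm.measurable) e.measurable]
  refine setLIntegral_congr_fun (e.measurable hs) (fun x _ => ?_)
  simp

lemma gauss_prod :
    (gaussianReal 0 1).prod (gaussianReal 0 1)
      = (volume : Measure (ℝ × ℝ)).withDensity
          (fun p => gaussianPDF 0 1 p.1 * gaussianPDF 0 1 p.2) := by
  have hγ := gaussianReal_of_var_ne_zero 0 (one_ne_zero (α := NNReal))
  rw [Measure.volume_eq_prod]
  refine Measure.prod_eq (μ := gaussianReal 0 1) (ν := gaussianReal 0 1) fun s t hs ht => ?_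
  rw [withDensity_apply _ (hs.prod ht), ← Measure.prod_restrict,
    lintegral_prod_mul (measurable_gaussianPDF 0 1).aemeasurable
      (measurable_gaussianPDF 0 1).aemeasurable,
    hγ, withDensity_apply _ hs, withDensity_apply _ ht]

lemma pdf_rot {x₁ y₁ x₂ y₂ : ℝ} (h : x₁ ^ 2 + y₁ ^ 2 = x₂ ^ 2 + y₂ ^ 2) :
    gaussianPDF 0 1 x₁ * gaussianPDF 0 1 y₁ = gaussianPDF 0 1 x₂ * gaussianPDF 0 1 y₂ := by
  have hne : ∀ x : ℝ, 0 ≤ gaussianPDFReal 0 1 x := fun x => gaussianPDFReal_nonneg 0 1 x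
  rw [gaussianPDF, gaussianPDF, gaussianPDF, gaussianPDF,
    ← ENNReal.ofReal_mul (hne x₁), ← ENNReal.ofReal_mul (hne x₂)]
  congr 1
  simp only [gaussianPDFReal, NNReal.coe_one, mul_one, sub_zero]
  rw [mul_mul_mul_comm, ← Real.exp_add, mul_mul_mul_comm, ← Real.exp_add]
  congr 1
  field_simp
  congr 1
  linarith

end GaussRotAux

namespace GaussRotAux2
open GaussRotAux

def rotEquiv (a b c d : ℝ) (h00 : a*a + c*c = 1) (h01 : a*b + c*d = 0) (h11 : b*b + d*d = 1)
    (r00 : a*a + b*b = 1) (r01 : a*c + b*d = 0) (r11 : c*c + d*d = 1) :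
    (ℝ × ℝ) ≃ᵐ (ℝ × ℝ) where
  toEquiv :=
  { toFun := fun p => (a * p.1 + b * p.2, c * p.1 + d * p.2)
    invFun := fun p => (a * p.1 + c * p.2, b * p.1 + d * p.2)
    left_inv := fun p => by
      obtain ⟨x, y⟩ := p
      simp only [Prod.mk.injEq]
      constructor
      · linear_combination x * h00 + y * h01
      · linear_combination x * h01 + y * h11
    right_inv := fun p => by
      obtain ⟨x, y⟩ := p
      simp only [Prod.mk.injEq]
      constructor
      · linear_combination x * r00 + y * r01
      · linear_combination x * r01 + y * r11 }
  measurable_toFun :=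
    ((measurable_fst.const_mul a).add (measurable_snd.const_mul b)).prodMk
      ((measurable_fst.const_mul c).add (measurable_snd.const_mul d))
  measurable_invFun :=
    ((measurable_fst.const_mul a).add (measurable_snd.const_mul c)).prodMk
      ((measurable_fst.const_mul b).add (measurable_snd.const_mul d))

lemma rot_vol (a b c d : ℝ) (hdet : (a*d - b*c) * (a*d - b*c) = 1) :
    Measure.map (fun p : ℝ × ℝ => (a*p.1+b*p.2, c*p.1+d*p.2)) volume = volume := by
  have hd : a*d - b*c ≠ 0 := by
    intro h; rw [h] at hdet; simp at hdet
  have hlin : LinearMap.det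
      (Matrix.toLin (Module.Basis.finTwoProd ℝ) (Module.Basis.finTwoProd ℝ) !![a,b;c,d]) = a*d-b*c := by
    rw [LinearMap.det_toLin, Matrix.det_fin_two_of]
  have hfun : (fun p : ℝ × ℝ => (a*p.1+b*p.2, c*p.1+d*p.2))
      = ⇑(Matrix.toLin (Module.Basis.finTwoProd ℝ) (Module.Basis.finTwoProd ℝ) !![a,b;c,d]) := by
    funext p; rw [Matrix.toLin_finTwoProd_apply]
  rw [hfun, Measure.map_linearMap_addHaar_eq_smul_addHaar volume (by rw [hlin]; exact hd), hlin]
  have habs : |(a*d-b*c)⁻¹| = 1 := by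
    rcases mul_self_eq_one_iff.mp hdet with h | h <;> norm_num [h]
  rw [habs]; simp

lemma rot_gauss (a b c d : ℝ) (h00 : a*a + c*c = 1) (h01 : a*b + c*d = 0) (h11 : b*b + d*d = 1)
    (r00 : a*a + b*b = 1) (r01 : a*c + b*d = 0) (r11 : c*c + d*d = 1) :
    Measure.map (fun p : ℝ × ℝ => (a*p.1+b*p.2, c*p.1+d*p.2))
        ((gaussianReal 0 1).prod (gaussianReal 0 1))
      = (gaussianReal 0 1).prod (gaussianReal 0 1) := by
  set e := rotEquiv a b c d h00 h01 h11 r00 r01 r11 with he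
  have hcoe : (fun p : ℝ × ℝ => (a*p.1+b*p.2, c*p.1+d*p.2)) = ⇑e := rfl
  have hF : Measurable (fun p : ℝ × ℝ => gaussianPDF 0 1 p.1 * gaussianPDF 0 1 p.2) :=
    ((measurable_gaussianPDF 0 1).comp measurable_fst).mul
      ((measurable_gaussianPDF 0 1).comp measurable_snd)
  have hdet : (a*d - b*c) * (a*d - b*c) = 1 := by
    linear_combination (b*b+d*d) * h00 + h11 - (a*b+c*d) * h01
  have hFe : (fun p : ℝ × ℝ => gaussianPDF 0 1 p.1 * gaussianPDF 0 1 p.2) ∘ ⇑e.symm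
      = fun p : ℝ × ℝ => gaussianPDF 0 1 p.1 * gaussianPDF 0 1 p.2 := by
    funext p
    have hsymm : ⇑e.symm = fun p : ℝ × ℝ => (a * p.1 + c * p.2, b * p.1 + d * p.2) := rfl
    simp only [Function.comp_apply, hsymm]
    exact pdf_rot (by linear_combination (p.1^2) * r00 + (p.2^2) * r11 + (2*p.1*p.2) * r01)
  rw [gauss_prod, hcoe, map_withDensity_mequiv e volume hF, hFe, ← hcoe,
    rot_vol a b c d hdet, ← gauss_prod]

end GaussRotAux2

open GaussRotAux GaussRotAux2 in
/-- mapping two independent uniforms through `Φ⁻¹` componentwise,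
rotating by an orthogonal matrix, and mapping back through `Φ` componentwise
again yields independent uniform components on `[0,1]`; yet, when the rotation
genuinely mixes the coordinates, the resulting map is not of the pointwise form
`(u,v) ↦ (h₁ u, h₂ v)`.  This demonstrates the unidentifiability of nonlinear
ICA. -/
theorem gaussian_rotation_unidentifiability {Ω : Type*} [MeasurableSpace Ω]
    (μ : Measure Ω) [IsProbabilityMeasure μ]
    (U V : Ω → ℝ) (hU : Measurable U) (hV : Measurable V)
    (hUunif : Measure.map U μ = volume.restrict (Set.Icc (0:ℝ) 1))
    (hVunif : Measure.map V μ = volume.restrict (Set.Icc (0:ℝ) 1))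
    (hUV : IndepFun U V μ)
    (Φ : ℝ → ℝ) (hΦ : ∀ x, Φ x = ((gaussianReal 0 1) (Set.Iic x)).toReal)
    (Ψ : ℝ → ℝ) (hΨleft : ∀ x, Ψ (Φ x) = x)
    (hΨright : ∀ y ∈ Set.Ioo (0:ℝ) 1, Φ (Ψ y) = y)
    (Q : Matrix (Fin 2) (Fin 2) ℝ) (hQ : Qᵀ * Q = 1)
    (T : ℝ × ℝ → ℝ × ℝ)
    (hT : ∀ uv : ℝ × ℝ, T uv
      = (Φ (Q 0 0 * Ψ uv.1 + Q 0 1 * Ψ uv.2), Φ (Q 1 0 * Ψ uv.1 + Q 1 1 * Ψ uv.2))) :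
    IndepFun (fun ω => (T (U ω, V ω)).1) (fun ω => (T (U ω, V ω)).2) μ ∧
    Measure.map (fun ω => (T (U ω, V ω)).1) μ = volume.restrict (Set.Icc (0:ℝ) 1) ∧
    Measure.map (fun ω => (T (U ω, V ω)).2) μ = volume.restrict (Set.Icc (0:ℝ) 1) ∧
    ((Q 0 0 ≠ 0 ∧ Q 0 1 ≠ 0) →
      ¬ ∃ h₁ h₂ : ℝ → ℝ, ∀ u ∈ Set.Ioo (0:ℝ) 1, ∀ v ∈ Set.Ioo (0:ℝ) 1,
        T (u, v) = (h₁ u, h₂ v)) := by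
  
  have hγIic : ∀ x, gaussianReal 0 1 (Set.Iic x) = ENNReal.ofReal (Φ x) := by
    intro x; rw [hΦ x, ENNReal.ofReal_toReal (measure_ne_top _ _)]
  have hΦpos : ∀ x, 0 < Φ x := by
    intro x; rw [hΦ x]
    exact ENNReal.toReal_pos
      (gauss_pos (by rw [Real.volume_Iic]; exact ENNReal.zero_lt_top)).ne'
      (measure_ne_top _ _)
  have hΦlt1 : ∀ x, Φ x < 1 := by
    intro x
    have hcompl : gaussianReal 0 1 (Set.Iic x) + gaussianReal 0 1 (Set.Ioi x) = 1 := by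
      have := measure_add_measure_compl (μ := gaussianReal 0 1)
        (measurableSet_Iic (a := x))
      rwa [Set.compl_Iic, measure_univ] at this
    have hIoi : 0 < gaussianReal 0 1 (Set.Ioi x) :=
      gauss_pos (by rw [Real.volume_Ioi]; exact ENNReal.zero_lt_top)
    have h1 : gaussianReal 0 1 (Set.Iic x) < 1 := by
      calc gaussianReal 0 1 (Set.Iic x)
          < gaussianReal 0 1 (Set.Iic x) + gaussianReal 0 1 (Set.Ioi x) :=
            ENNReal.lt_add_right (measure_ne_top _ _) hIoi.ne'
        _ = 1 := hcompl
    rw [hΦ x]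
    have := (ENNReal.toReal_lt_toReal (measure_ne_top (gaussianReal 0 1) _)
      (by simp : (1 : ENNReal) ≠ ⊤)).mpr h1
    simpa using this
  have hΦmono : Monotone Φ := by
    intro x y hxy
    rw [hΦ x, hΦ y]
    exact ENNReal.toReal_mono (measure_ne_top _ _) (measure_mono (Set.Iic_subset_Iic.mpr hxy))
  have hΦsm : StrictMono Φ :=
    hΦmono.strictMono_of_injective (Function.LeftInverse.injective hΨleft)
  have hΦmeas : Measurable Φ := hΦmono.measurable
  set Ψ' : ℝ → ℝ := fun u => if u ∈ Set.Ioo (0:ℝ) 1 then Ψ u else 0 with hΨ'def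
  have hΨ'eq : ∀ u ∈ Set.Ioo (0:ℝ) 1, Ψ' u = Ψ u := fun u hu => if_pos hu
  have hkey : ∀ (x : ℝ), ∀ u ∈ Set.Ioo (0:ℝ) 1, (Ψ u ≤ x ↔ u ≤ Φ x) := by
    intro x u hu
    constructor
    · intro h
      rw [← hΨright u hu]
      exact hΦmono h
    · intro h
      by_contra hcon
      push_neg at hcon
      have h2 := hΦsm hcon
      rw [hΨright u hu] at h2
      exact absurd h (not_le.mpr h2)
  have hΨ'meas : Measurable Ψ' := by
    refine measurable_of_Iic fun x => ?_
    have hset : Ψ' ⁻¹' Set.Iic x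
        = (Set.Ioo (0:ℝ) 1 ∩ Set.Iic (Φ x)) ∪ ((Set.Ioo (0:ℝ) 1)ᶜ ∩ {_u : ℝ | (0:ℝ) ≤ x}) := by
      ext u
      by_cases hu : u ∈ Set.Ioo (0:ℝ) 1
      · obtain ⟨hu1, hu2⟩ := hu
        simp [hΨ'def, hu1, hu2, hkey x u ⟨hu1, hu2⟩]
      · rw [Set.mem_Ioo] at hu
        simp [hΨ'def, hu]
    rw [hset]
    refine (measurableSet_Ioo.inter measurableSet_Iic).union
      (measurableSet_Ioo.compl.inter ?_)
    by_cases hx : (0:ℝ) ≤ x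
    · simp [hx]
    · simp [hx]
  have hae : ∀ (W : Ω → ℝ), Measurable W →
      Measure.map W μ = volume.restrict (Set.Icc (0:ℝ) 1) →
      ∀ᵐ ω ∂μ, W ω ∈ Set.Ioo (0:ℝ) 1 := by
    intro W hW hWlaw
    have h1 : μ (W ⁻¹' Set.Ioo (0:ℝ) 1) = 1 := by
      rw [← Measure.map_apply hW measurableSet_Ioo, hWlaw,
        Measure.restrict_apply measurableSet_Ioo,
        Set.inter_eq_left.mpr Set.Ioo_subset_Icc_self, Real.volume_Ioo]
      norm_num
    have h2 : μ (W ⁻¹' Set.Ioo (0:ℝ) 1)ᶜ = 0 :=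
      (prob_compl_eq_zero_iff (hW measurableSet_Ioo)).mpr h1
    rw [ae_iff]
    exact h2
  have hlaw : ∀ (W : Ω → ℝ), Measurable W →
      Measure.map W μ = volume.restrict (Set.Icc (0:ℝ) 1) →
      Measure.map (fun ω => Ψ' (W ω)) μ = gaussianReal 0 1 := by
    intro W hW hWlaw
    have hWae := hae W hW hWlaw
    have hmeas : Measurable fun ω => Ψ' (W ω) := hΨ'meas.comp hW
    haveI : IsProbabilityMeasure (Measure.map (fun ω => Ψ' (W ω)) μ) :=
      Measure.isProbabilityMeasure_map hmeas.aemeasurable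
    refine Measure.ext_of_Iic _ _ fun x => ?_
    rw [Measure.map_apply hmeas measurableSet_Iic]
    have hsets : ((fun ω => Ψ' (W ω)) ⁻¹' Set.Iic x) =ᵐ[μ] (W ⁻¹' Set.Iic (Φ x)) := by
      rw [Filter.eventuallyEq_set]
      filter_upwards [hWae] with ω hω
      simp only [Set.mem_preimage, Set.mem_Iic]
      rw [hΨ'eq _ hω]
      exact hkey x _ hω
    rw [measure_congr hsets, ← Measure.map_apply hW measurableSet_Iic, hWlaw,
      Measure.restrict_apply measurableSet_Iic, hγIic]
    have hx1 : Φ x < 1 := hΦlt1 x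
    have hinter : Set.Iic (Φ x) ∩ Set.Icc (0:ℝ) 1 = Set.Icc 0 (Φ x) := by
      ext u; simp only [Set.mem_inter_iff, Set.mem_Iic, Set.mem_Icc]
      constructor
      · rintro ⟨h1, h2, h3⟩; exact ⟨h2, h1⟩
      · rintro ⟨h1, h2⟩; exact ⟨h2, h1, h2.trans hx1.le⟩
    rw [hinter, Real.volume_Icc]
    norm_num
  set X : Ω → ℝ := fun ω => Ψ' (U ω) with hXdef
  set Y : Ω → ℝ := fun ω => Ψ' (V ω) with hYdef
  have hX : Measurable X := hΨ'meas.comp hU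
  have hY : Measurable Y := hΨ'meas.comp hV
  have hXlaw : Measure.map X μ = gaussianReal 0 1 := hlaw U hU hUunif
  have hYlaw : Measure.map Y μ = gaussianReal 0 1 := hlaw V hV hVunif
  have hXY : IndepFun X Y μ := hUV.comp hΨ'meas hΨ'meas
  have hjoint : Measure.map (fun ω => (X ω, Y ω)) μ
      = (gaussianReal 0 1).prod (gaussianReal 0 1) := by
    rw [(indepFun_iff_map_prod_eq_prod_map_map hX.aemeasurable hY.aemeasurable).mp hXY,
      hXlaw, hYlaw]
  -- matrix entry relations
  have hQ' : Q * Qᵀ = 1 := mul_eq_one_comm.mp hQ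
  have hent := fun i j => Matrix.ext_iff.mpr hQ i j
  have hent' := fun i j => Matrix.ext_iff.mpr hQ' i j
  have c00 : Q 0 0 * Q 0 0 + Q 1 0 * Q 1 0 = 1 := by
    have := hent 0 0
    simpa [Matrix.mul_apply, Matrix.transpose_apply, Fin.sum_univ_two, Matrix.one_apply]
      using this
  have c01 : Q 0 0 * Q 0 1 + Q 1 0 * Q 1 1 = 0 := by
    have := hent 0 1
    simpa [Matrix.mul_apply, Matrix.transpose_apply, Fin.sum_univ_two, Matrix.one_apply]
      using this
  have c11 : Q 0 1 * Q 0 1 + Q 1 1 * Q 1 1 = 1 := by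
    have := hent 1 1
    simpa [Matrix.mul_apply, Matrix.transpose_apply, Fin.sum_univ_two, Matrix.one_apply]
      using this
  have r00 : Q 0 0 * Q 0 0 + Q 0 1 * Q 0 1 = 1 := by
    have := hent' 0 0
    simpa [Matrix.mul_apply, Matrix.transpose_apply, Fin.sum_univ_two, Matrix.one_apply]
      using this
  have r01 : Q 0 0 * Q 1 0 + Q 0 1 * Q 1 1 = 0 := by
    have := hent' 0 1
    simpa [Matrix.mul_apply, Matrix.transpose_apply, Fin.sum_univ_two, Matrix.one_apply]
      using this
  have r11 : Q 1 0 * Q 1 0 + Q 1 1 * Q 1 1 = 1 := by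
    have := hent' 1 1
    simpa [Matrix.mul_apply, Matrix.transpose_apply, Fin.sum_univ_two, Matrix.one_apply]
      using this
  have hrot := rot_gauss (Q 0 0) (Q 0 1) (Q 1 0) (Q 1 1) c00 c01 c11 r00 r01 r11
  set A : Ω → ℝ := fun ω => Q 0 0 * X ω + Q 0 1 * Y ω with hAdef
  set B : Ω → ℝ := fun ω => Q 1 0 * X ω + Q 1 1 * Y ω with hBdef
  have hA : Measurable A := (hX.const_mul _).add (hY.const_mul _)
  have hB : Measurable B := (hX.const_mul _).add (hY.const_mul _)
  have hLmeas : Measurable (fun p : ℝ × ℝ =>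
      (Q 0 0 * p.1 + Q 0 1 * p.2, Q 1 0 * p.1 + Q 1 1 * p.2)) :=
    ((measurable_fst.const_mul _).add (measurable_snd.const_mul _)).prodMk
      ((measurable_fst.const_mul _).add (measurable_snd.const_mul _))
  have hABfun : (fun ω => (A ω, B ω))
      = (fun p : ℝ × ℝ => (Q 0 0 * p.1 + Q 0 1 * p.2, Q 1 0 * p.1 + Q 1 1 * p.2))
        ∘ (fun ω => (X ω, Y ω)) := rfl
  have hABjoint : Measure.map (fun ω => (A ω, B ω)) μ
      = (gaussianReal 0 1).prod (gaussianReal 0 1) := by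
    rw [hABfun, ← Measure.map_map hLmeas (hX.prodMk hY), hjoint, hrot]
  have hAlaw : Measure.map A μ = gaussianReal 0 1 := by
    have hfst : A = Prod.fst ∘ (fun ω => (A ω, B ω)) := rfl
    rw [hfst, ← Measure.map_map measurable_fst (hA.prodMk hB), hABjoint,
      Measure.map_fst_prod, measure_univ, one_smul]
  have hBlaw : Measure.map B μ = gaussianReal 0 1 := by
    have hsnd : B = Prod.snd ∘ (fun ω => (A ω, B ω)) := rfl
    rw [hsnd, ← Measure.map_map measurable_snd (hA.prodMk hB), hABjoint,
      Measure.map_snd_prod, measure_univ, one_smul]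
  have hABindep : IndepFun A B μ := by
    rw [indepFun_iff_map_prod_eq_prod_map_map hA.aemeasurable hB.aemeasurable,
      hABjoint, hAlaw, hBlaw]
  have hUae := hae U hU hUunif
  have hVae := hae V hV hVunif
  have hae1 : (fun ω => (T (U ω, V ω)).1) =ᵐ[μ] fun ω => Φ (A ω) := by
    filter_upwards [hUae, hVae] with ω h1 h2
    simp only [hT, hAdef, hXdef, hYdef, hΨ'eq _ h1, hΨ'eq _ h2]
  have hae2 : (fun ω => (T (U ω, V ω)).2) =ᵐ[μ] fun ω => Φ (B ω) := by
    filter_upwards [hUae, hVae] with ω h1 h2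
    simp only [hT, hBdef, hXdef, hYdef, hΨ'eq _ h1, hΨ'eq _ h2]
  have hΦγ : Measure.map Φ (gaussianReal 0 1) = volume.restrict (Set.Icc (0:ℝ) 1) := by
    haveI : IsProbabilityMeasure (Measure.map Φ (gaussianReal 0 1)) :=
      Measure.isProbabilityMeasure_map hΦmeas.aemeasurable
    refine Measure.ext_of_Iic _ _ fun y => ?_
    rw [Measure.map_apply hΦmeas measurableSet_Iic, Measure.restrict_apply measurableSet_Iic]
    rcases le_or_gt y 0 with hy0 | hy0
    · have h1 : Φ ⁻¹' Set.Iic y = ∅ := by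
        ext x
        simp only [Set.mem_preimage, Set.mem_Iic, Set.mem_empty_iff_false, iff_false, not_le]
        exact lt_of_le_of_lt hy0 (hΦpos x)
      have h2 : volume (Set.Iic y ∩ Set.Icc (0:ℝ) 1) = 0 := by
        refine measure_mono_null (t := Set.Icc (0:ℝ) y)
          (fun u hu => Set.mem_Icc.mpr ⟨hu.2.1, hu.1⟩) ?_
        rw [Real.volume_Icc]
        exact ENNReal.ofReal_eq_zero.mpr (by linarith)
      rw [h1, h2, measure_empty]
    · rcases le_or_gt 1 y with hy1 | hy1
      · have h1 : Φ ⁻¹' Set.Iic y = Set.univ := by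
          ext x
          simp only [Set.mem_preimage, Set.mem_Iic, Set.mem_univ, iff_true]
          exact (hΦlt1 x).le.trans hy1
        have h2 : Set.Iic y ∩ Set.Icc (0:ℝ) 1 = Set.Icc 0 1 :=
          Set.inter_eq_right.mpr (fun u hu => hu.2.trans hy1)
        rw [h1, h2, measure_univ, Real.volume_Icc]
        norm_num
      · have hy : y ∈ Set.Ioo (0:ℝ) 1 := ⟨hy0, hy1⟩
        have h1 : Φ ⁻¹' Set.Iic y = Set.Iic (Ψ y) := by
          ext x
          simp only [Set.mem_preimage, Set.mem_Iic]
          constructor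
          · intro h
            refine hΦsm.le_iff_le.mp ?_
            rwa [hΨright y hy]
          · intro h
            have h3 := hΦmono h
            rwa [hΨright y hy] at h3
        have h2 : Set.Iic y ∩ Set.Icc (0:ℝ) 1 = Set.Icc 0 y := by
          ext u
          simp only [Set.mem_inter_iff, Set.mem_Iic, Set.mem_Icc]
          constructor
          · rintro ⟨hu1, hu2, hu3⟩; exact ⟨hu2, hu1⟩
          · rintro ⟨hu1, hu2⟩; exact ⟨hu2, hu1, hu2.trans hy1.le⟩
        rw [h1, h2, hγIic, hΨright y hy, Real.volume_Icc]
        norm_num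
  have hmap1 : Measure.map (fun ω => (T (U ω, V ω)).1) μ
      = volume.restrict (Set.Icc (0:ℝ) 1) := by
    rw [Measure.map_congr hae1, show (fun ω => Φ (A ω)) = Φ ∘ A from rfl,
      ← Measure.map_map hΦmeas hA, hAlaw, hΦγ]
  have hmap2 : Measure.map (fun ω => (T (U ω, V ω)).2) μ
      = volume.restrict (Set.Icc (0:ℝ) 1) := by
    rw [Measure.map_congr hae2, show (fun ω => Φ (B ω)) = Φ ∘ B from rfl,
      ← Measure.map_map hΦmeas hB, hBlaw, hΦγ]
  have hindep : IndepFun (fun ω => (T (U ω, V ω)).1) (fun ω => (T (U ω, V ω)).2) μ :=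
    (hABindep.comp hΦmeas hΦmeas).congr hae1.symm hae2.symm
  refine ⟨hindep, hmap1, hmap2, ?_⟩
  rintro ⟨hQ00, hQ01⟩ ⟨h₁, h₂, hpt⟩
  have hhalf : (1:ℝ)/2 ∈ Set.Ioo (0:ℝ) 1 := by norm_num
  have key : ∀ v ∈ Set.Ioo (0:ℝ) 1, Φ (Q 0 0 * Ψ (1/2) + Q 0 1 * Ψ v) = h₁ (1/2) := by
    intro v hv
    have h := hpt (1/2) hhalf v hv
    rw [hT] at h
    exact (Prod.ext_iff.mp h).1
  have hv0 : Φ 0 ∈ Set.Ioo (0:ℝ) 1 := ⟨hΦpos 0, hΦlt1 0⟩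
  have hv1 : Φ 1 ∈ Set.Ioo (0:ℝ) 1 := ⟨hΦpos 1, hΦlt1 1⟩
  have h0 := key (Φ 0) hv0
  have h1' := key (Φ 1) hv1
  rw [hΨleft 0] at h0
  rw [hΨleft 1] at h1'
  have heq : Q 0 0 * Ψ (1/2) + Q 0 1 * 0 = Q 0 0 * Ψ (1/2) + Q 0 1 * 1 :=
    Function.LeftInverse.injective hΨleft (h0.trans h1'.symm)
  simp only [mul_zero, add_zero, mul_one, left_eq_add] at heq
  exact hQ01 heq
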